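/- Let V, E be real reflexive Banach spaces, Λ ⊆ E nonempty closed convex, X a Banach space, γ : V → X linear bounded, J : X → ℝ locally Lipschitz, b : V × E → ℝ bilinear bounded, A : V → V*, f ∈ V*, and h : V → ℝ with h(0)=0 and h(v) > 0 for all v ≠ 0. Assume u ↦ A(u) + γ*∂J(γu) is h-relaxed monotone. If (u₁,λ₁), (u₂,λ₂) ∈ V × Λ both satisfy ⟨A(uᵢ), v-uᵢ⟩ + b(v-uᵢ, λᵢ) + J⁰(γuᵢ; γv - γuᵢ) ≥ ⟨f, v-uᵢ⟩ for all v ∈ V and b(uᵢ, ρ-λᵢ) ≤ 0 for all ρ ∈ Λ, then u₁ = u₂. -/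

import Mathlib

/-!
Test the inequality for `u₁` with `v = u₂` and the one for `u₂` with `v = u₁`, and add them.
The terms in `b` combine to `b(u₂, λ₁ - λ₂) + b(u₁, λ₂ - λ₁) ≤ 0`, so
`⟨A u₁ - A u₂, u₁ - u₂⟩ ≤ J⁰(γu₁; γu₂ - γu₁) + J⁰(γu₂; γu₁ - γu₂)`.
For locally Lipschitz `J` the Clarke derivative `J⁰(x; ·)` is sublinear and bounded by a multiple
of the norm, so by Hahn–Banach it is attained: `J⁰(x; d) = ⟨ξ, d⟩` for some `ξ ∈ ∂J(x)`.
Choosing such `ξ₁ ∈ ∂J(γu₁)` and `ξ₂ ∈ ∂J(γu₂)`, relaxed monotonicity gives `h(u₁ - u₂) ≤ 0`,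
hence `u₁ = u₂`.
-/

open Filter Topology

/-- Clarke generalized directional derivative of `J` at `u` in direction `v`. -/
noncomputable def clarkeDeriv {V : Type*} [NormedAddCommGroup V] [NormedSpace ℝ V]
    (J : V → ℝ) (u v : V) : ℝ :=
  Filter.limsup (fun p : V × ℝ => (J (p.1 + p.2 • v) - J p.1) / p.2)
    ((𝓝 u) ×ˢ (𝓝[>] (0 : ℝ)))

/-- Clarke generalized gradient of `J` at `u`. -/
def clarkeGrad {V : Type*} [NormedAddCommGroup V] [NormedSpace ℝ V]
    (J : V → ℝ) (u : V) : Set (V →L[ℝ] ℝ) :=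
  {ξ | ∀ w, ξ w ≤ clarkeDeriv J u w}

theorem exists_linearMap_le_sublinear_apply_eq {E : Type*} [AddCommGroup E] [Module ℝ E]
    (N : E → ℝ) (N_hom : ∀ c : ℝ, 0 < c → ∀ x, N (c • x) = c * N x)
    (N_add : ∀ x y, N (x + y) ≤ N x + N y) (d : E) :
    ∃ g : E →ₗ[ℝ] ℝ, g d = N d ∧ ∀ x, g x ≤ N x := by
  have N_zero : N 0 = 0 := by
    have h2 := N_hom 2 two_pos 0
    rw [smul_zero] at h2
    linarith
  have N_neg : 0 ≤ N d + N (-d) := by simpa [N_zero] using N_add d (-d)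
  have hd : ∀ c : ℝ, c • d = 0 → c • N d = 0 := by
    intro c hc
    rcases smul_eq_zero.1 hc with rfl | rfl
    · exact zero_smul ℝ _
    · rw [N_zero, smul_zero]
  set f : E →ₗ.[ℝ] ℝ := LinearPMap.mkSpanSingleton' d (N d) hd
  have hf : ∀ z : f.domain, f z ≤ N z := by
    rintro ⟨z, hz⟩
    obtain ⟨c, rfl⟩ := Submodule.mem_span_singleton.1 hz
    rw [LinearPMap.mkSpanSingleton'_apply, RingHom.id_apply, smul_eq_mul]
    change c * N d ≤ N (c • d)
    rcases lt_trichotomy c 0 with hc | rfl | hc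
    · rw [← neg_smul_neg, N_hom (-c) (neg_pos.2 hc)]
      nlinarith
    · rw [zero_smul, N_zero, zero_mul]
    · rw [N_hom c hc]
  obtain ⟨g, hgf, hgN⟩ := exists_extension_of_le_sublinear f N N_hom N_add hf
  have hmem : d ∈ f.domain := Submodule.mem_span_singleton_self d
  exact ⟨g, (hgf ⟨d, hmem⟩).trans (LinearPMap.mkSpanSingleton'_apply_self _ _ _ _), hgN⟩

theorem exists_continuousLinearMap_le_sublinear_apply_eq {E : Type*} [SeminormedAddCommGroup E]
    [NormedSpace ℝ E] (N : E → ℝ) (N_hom : ∀ c : ℝ, 0 < c → ∀ x, N (c • x) = c * N x)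
    (N_add : ∀ x y, N (x + y) ≤ N x + N y) {K : ℝ} (N_le : ∀ x, N x ≤ K * ‖x‖) (d : E) :
    ∃ g : E →L[ℝ] ℝ, g d = N d ∧ ∀ x, g x ≤ N x := by
  obtain ⟨g, hgd, hgN⟩ := exists_linearMap_le_sublinear_apply_eq N N_hom N_add d
  have hg_bound : ∀ x, ‖g x‖ ≤ K * ‖x‖ := by
    intro x
    rw [Real.norm_eq_abs, abs_le]
    have := (hgN (-x)).trans (N_le (-x))
    rw [map_neg, norm_neg] at this
    exact ⟨by linarith, (hgN x).trans (N_le x)⟩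
  exact ⟨g.mkContinuous K hg_bound, hgd, hgN⟩

section ClarkeFilter

variable {X : Type*} [TopologicalSpace X]

def clarkeFilter (x : X) : Filter (X × ℝ) := 𝓝 x ×ˢ 𝓝[>] 0

instance (x : X) : (clarkeFilter x).NeBot := by
  unfold clarkeFilter
  infer_instance

theorem tendsto_fst_clarkeFilter (x : X) : Tendsto Prod.fst (clarkeFilter x) (𝓝 x) :=
  tendsto_fst

theorem tendsto_snd_clarkeFilter (x : X) : Tendsto Prod.snd (clarkeFilter x) (𝓝[>] 0) :=
  tendsto_snd

theorem eventually_pos_snd_clarkeFilter (x : X) : ∀ᶠ p in clarkeFilter x, 0 < p.2 :=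
  (tendsto_snd_clarkeFilter x).eventually self_mem_nhdsWithin

theorem tendsto_rescale_clarkeFilter (x : X) {c : ℝ} (hc : 0 < c) :
    Tendsto (fun p : X × ℝ => (p.1, c * p.2)) (clarkeFilter x) (clarkeFilter x) := by
  refine (tendsto_fst_clarkeFilter x).prodMk (tendsto_nhdsWithin_iff.2 ⟨?_, ?_⟩)
  · simpa using ((tendsto_snd_clarkeFilter x).mono_right nhdsWithin_le_nhds).const_mul c
  · exact (eventually_pos_snd_clarkeFilter x).mono fun _ h => mul_pos hc h

end ClarkeFilter

section Clarke

variable {X : Type*} [NormedAddCommGroup X] [NormedSpace ℝ X]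

noncomputable def diffQuotient (J : X → ℝ) (v : X) (p : X × ℝ) : ℝ :=
  (J (p.1 + p.2 • v) - J p.1) / p.2

variable {J : X → ℝ} {x : X}

theorem clarkeDeriv_eq_limsup (J : X → ℝ) (x v : X) :
    clarkeDeriv J x v = limsup (diffQuotient J v) (clarkeFilter x) := rfl

theorem tendsto_translate_clarkeFilter (x w : X) :
    Tendsto (fun p : X × ℝ => (p.1 + p.2 • w, p.2)) (clarkeFilter x) (clarkeFilter x) := by
  refine Tendsto.prodMk ?_ (tendsto_snd_clarkeFilter x)
  simpa using (tendsto_fst_clarkeFilter x).add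
    (((tendsto_snd_clarkeFilter x).mono_right nhdsWithin_le_nhds).smul_const w)

-- This and `diffQuotient_smul` hold at `p.2 = 0` too, where both sides are `0` since `a / 0 = 0`.
theorem diffQuotient_add (J : X → ℝ) (v w : X) (p : X × ℝ) :
    diffQuotient J (v + w) p = diffQuotient J v (p.1 + p.2 • w, p.2) + diffQuotient J w p := by
  simp only [diffQuotient, smul_add, ← add_assoc, add_right_comm _ (p.2 • v)]
  ring

theorem diffQuotient_smul (J : X → ℝ) {c : ℝ} (hc : c ≠ 0) (v : X) (p : X × ℝ) :
    diffQuotient J (c • v) p = c * diffQuotient J v (p.1, c * p.2) := by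
  simp only [diffQuotient, smul_smul, mul_comm p.2 c]
  rw [mul_div_assoc', mul_div_mul_left _ _ hc]

theorem LocallyLipschitz.exists_eventually_abs_diffQuotient_le (hJ : LocallyLipschitz J)
    (x : X) : ∃ K : ℝ, ∀ v, ∀ᶠ p in clarkeFilter x, |diffQuotient J v p| ≤ K * ‖v‖ := by
  obtain ⟨K, t, ht, hJt⟩ := hJ x
  refine ⟨K, fun v => ?_⟩
  have hfst : ∀ᶠ p in clarkeFilter x, p.1 ∈ t := (tendsto_fst_clarkeFilter x).eventually ht
  filter_upwards [hfst, (tendsto_translate_clarkeFilter x v).eventually hfst,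
    eventually_pos_snd_clarkeFilter x] with p hp hpv hpos
  rw [diffQuotient, abs_div, abs_of_pos hpos, div_le_iff₀ hpos, ← Real.dist_eq]
  calc dist (J (p.1 + p.2 • v)) (J p.1) ≤ K * dist (p.1 + p.2 • v) p.1 :=
        hJt.dist_le_mul _ hpv _ hp
    _ = K * ‖v‖ * p.2 := by
        rw [dist_eq_norm, add_sub_cancel_left, norm_smul, Real.norm_of_nonneg hpos.le]
        ring

theorem clarkeDeriv_le_of_eventually_abs_le {v : X} {B : ℝ}
    (hB : ∀ᶠ p in clarkeFilter x, |diffQuotient J v p| ≤ B) : clarkeDeriv J x v ≤ B :=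
  limsup_le_of_le (isCoboundedUnder_le_of_eventually_le _ (hB.mono fun _ h => (abs_le.1 h).1))
    (hB.mono fun _ h => (abs_le.1 h).2)

theorem limsup_diffQuotient_comp_le {v : X} {B : ℝ}
    (hB : ∀ᶠ p in clarkeFilter x, |diffQuotient J v p| ≤ B) {m : X × ℝ → X × ℝ}
    (hm : Tendsto m (clarkeFilter x) (clarkeFilter x)) :
    limsup (diffQuotient J v ∘ m) (clarkeFilter x) ≤ clarkeDeriv J x v :=
  hm.limsup_comp_le_limsup
    (isCoboundedUnder_le_of_eventually_le _ ((hm.eventually hB).mono fun _ h => (abs_le.1 h).1))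
    (isBoundedUnder_of_eventually_le (hB.mono fun _ h => (abs_le.1 h).2))

theorem clarkeDeriv_add_le (hJ : LocallyLipschitz J) (x v w : X) :
    clarkeDeriv J x (v + w) ≤ clarkeDeriv J x v + clarkeDeriv J x w := by
  obtain ⟨K, hK⟩ := hJ.exists_eventually_abs_diffQuotient_le x
  have hm := tendsto_translate_clarkeFilter x w
  obtain ⟨hv_le, hv_ge⟩ :=
    isBoundedUnder_le_abs.1 (isBoundedUnder_of_eventually_le (hm.eventually (hK v)))
  obtain ⟨hw_le, hw_ge⟩ := isBoundedUnder_le_abs.1 (isBoundedUnder_of_eventually_le (hK w))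
  calc clarkeDeriv J x (v + w)
      = limsup (diffQuotient J v ∘ _ + diffQuotient J w) (clarkeFilter x) := by
        rw [clarkeDeriv_eq_limsup]
        exact congrArg (limsup · _) (funext (diffQuotient_add J v w))
    _ ≤ limsup (diffQuotient J v ∘ _) (clarkeFilter x) + clarkeDeriv J x w :=
        limsup_add_le hv_ge hv_le hw_ge.isCoboundedUnder_le hw_le
    _ ≤ clarkeDeriv J x v + clarkeDeriv J x w :=
        add_le_add_left (limsup_diffQuotient_comp_le (hK v) hm) _

theorem clarkeDeriv_smul_le (hJ : LocallyLipschitz J) (x : X) {c : ℝ} (hc : 0 < c) (v : X) :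
    clarkeDeriv J x (c • v) ≤ c * clarkeDeriv J x v := by
  obtain ⟨K, hK⟩ := hJ.exists_eventually_abs_diffQuotient_le x
  have hm := tendsto_rescale_clarkeFilter x hc
  obtain ⟨hv_le, hv_ge⟩ :=
    isBoundedUnder_le_abs.1 (isBoundedUnder_of_eventually_le (hm.eventually (hK v)))
  calc clarkeDeriv J x (c • v)
      = limsup ((c * ·) ∘ (diffQuotient J v ∘ _)) (clarkeFilter x) := by
        rw [clarkeDeriv_eq_limsup]
        exact congrArg (limsup · _) (funext (diffQuotient_smul J hc.ne' v))
    _ = c * limsup (diffQuotient J v ∘ _) (clarkeFilter x) :=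
        ((monotone_mul_left_of_nonneg hc.le).map_limsup_of_continuousAt _
          (continuous_const_mul c).continuousAt hv_le hv_ge.isCoboundedUnder_le).symm
    _ ≤ c * clarkeDeriv J x v :=
        mul_le_mul_of_nonneg_left (limsup_diffQuotient_comp_le (hK v) hm) hc.le

theorem clarkeDeriv_smul (hJ : LocallyLipschitz J) (x : X) {c : ℝ} (hc : 0 < c) (v : X) :
    clarkeDeriv J x (c • v) = c * clarkeDeriv J x v := by
  refine le_antisymm (clarkeDeriv_smul_le hJ x hc v) ?_
  calc c * clarkeDeriv J x v = c * clarkeDeriv J x (c⁻¹ • c • v) := by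
        rw [inv_smul_smul₀ hc.ne']
    _ ≤ c * (c⁻¹ * clarkeDeriv J x (c • v)) :=
        mul_le_mul_of_nonneg_left (clarkeDeriv_smul_le hJ x (inv_pos.2 hc) _) hc.le
    _ = clarkeDeriv J x (c • v) := mul_inv_cancel_left₀ hc.ne' _

theorem exists_mem_clarkeGrad_apply_eq (hJ : LocallyLipschitz J) (x d : X) :
    ∃ ξ ∈ clarkeGrad J x, ξ d = clarkeDeriv J x d := by
  obtain ⟨K, hK⟩ := hJ.exists_eventually_abs_diffQuotient_le x
  obtain ⟨ξ, hξd, hξ⟩ := exists_continuousLinearMap_le_sublinear_apply_eq (clarkeDeriv J x)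
    (fun _ hc v => clarkeDeriv_smul hJ x hc v) (clarkeDeriv_add_le hJ x)
    (fun v => clarkeDeriv_le_of_eventually_abs_le (hK v)) d
  exact ⟨ξ, hξ, hξd⟩

end Clarke

theorem uniqueness_first_component_general
    {V E X : Type*} [NormedAddCommGroup V] [NormedSpace ℝ V]
    [NormedAddCommGroup E] [NormedSpace ℝ E]
    [NormedAddCommGroup X] [NormedSpace ℝ X]
    (Λ : Set E)
    (γ : V →L[ℝ] X) (J : X → ℝ) (hJ : LocallyLipschitz J)
    (b : V →ₗ[ℝ] E →ₗ[ℝ] ℝ)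
    (A : V → (V →L[ℝ] ℝ)) (f : V →L[ℝ] ℝ)
    (h : V → ℝ) (hhpos : ∀ v : V, v ≠ 0 → 0 < h v)
    (hmono : ∀ u v : V, ∀ ξu ∈ clarkeGrad J (γ u), ∀ ξv ∈ clarkeGrad J (γ v),
      h (u - v) ≤ A u (u - v) + ξu (γ (u - v)) - A v (u - v) - ξv (γ (u - v)))
    (u₁ u₂ : V) (lam₁ lam₂ : E) (hlam₁ : lam₁ ∈ Λ) (hlam₂ : lam₂ ∈ Λ)
    (hs₁ : (∀ v : V, f (v - u₁) ≤
        A u₁ (v - u₁) + b (v - u₁) lam₁ + clarkeDeriv J (γ u₁) (γ v - γ u₁)) ∧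
      (∀ ρ ∈ Λ, b u₁ (ρ - lam₁) ≤ 0))
    (hs₂ : (∀ v : V, f (v - u₂) ≤
        A u₂ (v - u₂) + b (v - u₂) lam₂ + clarkeDeriv J (γ u₂) (γ v - γ u₂)) ∧
      (∀ ρ ∈ Λ, b u₂ (ρ - lam₂) ≤ 0)) :
    u₁ = u₂ := by
  obtain ⟨ξ₁, hξ₁, hξ₁_eq⟩ := exists_mem_clarkeGrad_apply_eq hJ (γ u₁) (γ u₂ - γ u₁)
  obtain ⟨ξ₂, hξ₂, hξ₂_eq⟩ := exists_mem_clarkeGrad_apply_eq hJ (γ u₂) (γ u₁ - γ u₂)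
  have hmono₁₂ := hmono u₁ u₂ ξ₁ hξ₁ ξ₂ hξ₂
  have hvar₁ := hs₁.1 u₂
  have hvar₂ := hs₂.1 u₁
  have hmult₁ := hs₁.2 lam₂ hlam₂
  have hmult₂ := hs₂.2 lam₁ hlam₁
  simp only [map_sub, LinearMap.sub_apply] at hmono₁₂ hvar₁ hvar₂ hmult₁ hmult₂ hξ₁_eq hξ₂_eq
  have h_nonpos : h (u₁ - u₂) ≤ 0 := by linarith
  by_contra hne
  exact (hhpos _ (sub_ne_zero.2 hne)).not_ge h_nonpos

/-- Theorem 3.4: uniqueness of the first component of solutions to the mixed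
variational-hemivariational inequality. -/
theorem uniqueness_first_component
    {V E X : Type*} [NormedAddCommGroup V] [NormedSpace ℝ V] [CompleteSpace V]
    [NormedAddCommGroup E] [NormedSpace ℝ E] [CompleteSpace E]
    [NormedAddCommGroup X] [NormedSpace ℝ X]
    (hreflV : Function.Surjective (NormedSpace.inclusionInDoubleDual ℝ V))
    (hreflE : Function.Surjective (NormedSpace.inclusionInDoubleDual ℝ E))
    (Λ : Set E) (hΛ : Λ.Nonempty) (hΛc : IsClosed Λ) (hΛconv : Convex ℝ Λ)
    (γ : V →L[ℝ] X) (J : X → ℝ) (hJ : LocallyLipschitz J)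
    (b : V →ₗ[ℝ] E →ₗ[ℝ] ℝ) (hb : ∃ M : ℝ, ∀ (v : V) (ρ : E), |b v ρ| ≤ M * ‖v‖ * ‖ρ‖)
    (A : V → (V →L[ℝ] ℝ)) (f : V →L[ℝ] ℝ)
    (h : V → ℝ) (hh0 : h 0 = 0) (hhpos : ∀ v : V, v ≠ 0 → 0 < h v)
    (hmono : ∀ u v : V, ∀ ξu ∈ clarkeGrad J (γ u), ∀ ξv ∈ clarkeGrad J (γ v),
      h (u - v) ≤ A u (u - v) + ξu (γ (u - v)) - A v (u - v) - ξv (γ (u - v)))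
    (u₁ u₂ : V) (lam₁ lam₂ : E) (hlam₁ : lam₁ ∈ Λ) (hlam₂ : lam₂ ∈ Λ)
    (hs₁ : (∀ v : V, f (v - u₁) ≤
        A u₁ (v - u₁) + b (v - u₁) lam₁ + clarkeDeriv J (γ u₁) (γ v - γ u₁)) ∧
      (∀ ρ ∈ Λ, b u₁ (ρ - lam₁) ≤ 0))
    (hs₂ : (∀ v : V, f (v - u₂) ≤
        A u₂ (v - u₂) + b (v - u₂) lam₂ + clarkeDeriv J (γ u₂) (γ v - γ u₂)) ∧
      (∀ ρ ∈ Λ, b u₂ (ρ - lam₂) ≤ 0)) :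
    u₁ = u₂ :=
  uniqueness_first_component_general Λ γ J hJ b A f h hhpos hmono u₁ u₂ lam₁ lam₂ hlam₁ hlam₂ hs₁
    hs₂
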